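/- arXiv:2301.04599 — 3 statements merged into one kernel-verified Lean document; each statement's English description precedes it below -/
import Mathlib

section
/- For every f in the Schwartz space on ℝ, the function α ↦ sup_{β ≠ α} |(f(α) − f(β))/(α − β)| belongs to L²(ℝ) with norm bounded by a universal constant times ‖f'‖_{L²}. -/
/-!
By the fundamental theorem of calculus, the difference quotient of `f` between `α` and `β` is an
average of `f'` over the interval with endpoints `α` and `β`, so the maximal slope function is
dominated pointwise by the uncentred Hardy–Littlewood maximal function of `|f'|`. This maximal
operator is of weak type `(1, 1)` by the Vitali covering lemma; applying the weak-type bound at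
level `t` to the part of `|f'|` above `t / 2` and integrating over `t` (layer-cake formula and
Tonelli) gives the strong `L²` bound with constant `√32`.
-/

open MeasureTheory Set
open scoped ENNReal

/-- The uncentred Hardy–Littlewood maximal function; the degenerate interval `a = b = x`
contributes `0 / 0 = 0`. -/
noncomputable def maximalFunction (u : ℝ → ℝ≥0∞) (x : ℝ) : ℝ≥0∞ :=
  ⨆ (a : ℝ) (_ : a ≤ x) (b : ℝ) (_ : x ≤ b), (∫⁻ y in Ioc a b, u y) / ENNReal.ofReal (b - a)

theorem lintegral_Ioc_div_le_maximalFunction (u : ℝ → ℝ≥0∞) {a x b : ℝ} (hax : a ≤ x)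
    (hxb : x ≤ b) : (∫⁻ y in Ioc a b, u y) / ENNReal.ofReal (b - a) ≤ maximalFunction u x :=
  le_iSup₂_of_le a hax (le_iSup₂_of_le (f := fun b (_ : x ≤ b) => _) b hxb le_rfl)

theorem mul_ofReal_sub_le_lintegral_Ioc_of_lt_div {u : ℝ → ℝ≥0∞} {t : ℝ≥0∞} {a b : ℝ}
    (h : t < (∫⁻ y in Ioc a b, u y) / ENNReal.ofReal (b - a)) :
    a < b ∧ t * ENNReal.ofReal (b - a) ≤ ∫⁻ y in Ioc a b, u y := by
  refine ⟨lt_of_not_ge fun hba => ?_, ENNReal.mul_le_of_le_div h.le⟩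
  simp [Ioc_eq_empty_of_le hba] at h

theorem Real.closedBall_midpoint_eq_Icc (a b : ℝ) :
    Metric.closedBall ((a + b) / 2) ((b - a) / 2) = Icc a b := by
  rw [Real.closedBall_eq_Icc]; congr 1 <;> ring

theorem Real.exists_disjoint_subfamily_volume_biUnion_Icc_le (S : Set (ℝ × ℝ))
    (hS : ∀ p ∈ S, p.1 < p.2) {R : ℝ} (hR : ∀ p ∈ S, p.2 - p.1 ≤ R) :
    ∃ v ⊆ S, v.Countable ∧ v.PairwiseDisjoint (fun p => Icc p.1 p.2) ∧
      volume (⋃ p ∈ S, Icc p.1 p.2) ≤ 4 * ∑' q : v, ENNReal.ofReal (q.1.2 - q.1.1) := by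
  simp_rw [← Real.closedBall_midpoint_eq_Icc]
  obtain ⟨v, hvS, hvdisj, hvcover⟩ :=
    Vitali.exists_disjoint_subfamily_covering_enlargement_closedBall S
      (fun p => (p.1 + p.2) / 2) (fun p => (p.2 - p.1) / 2) R
      (fun p hp => by linarith [hS p hp, hR p hp]) 4 (by norm_num)
  have hv : v.Countable := hvdisj.countable_of_nonempty_interior fun p hp => by
    rw [Real.closedBall_midpoint_eq_Icc, interior_Icc]; exact nonempty_Ioo.2 (hS p (hvS hp))
  refine ⟨v, hvS, hv, hvdisj, ?_⟩
  calc volume (⋃ p ∈ S, Metric.closedBall ((p.1 + p.2) / 2) ((p.2 - p.1) / 2))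
      ≤ volume (⋃ q ∈ v, Metric.closedBall ((q.1 + q.2) / 2) (4 * ((q.2 - q.1) / 2))) :=
        measure_mono <| iUnion₂_subset fun p hp =>
          let ⟨q, hqv, hq⟩ := hvcover p hp; fun _ hx => mem_biUnion hqv (hq hx)
    _ ≤ ∑' q : v, volume (Metric.closedBall ((q.1.1 + q.1.2) / 2) (4 * ((q.1.2 - q.1.1) / 2))) :=
        measure_biUnion_le _ hv _
    _ = 4 * ∑' q : v, ENNReal.ofReal (q.1.2 - q.1.1) := by
        rw [← ENNReal.tsum_mul_left]
        congr 1 with q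
        rw [Real.volume_closedBall, ← ENNReal.ofReal_ofNat, ← ENNReal.ofReal_mul (by norm_num)]
        ring_nf

theorem mul_volume_lt_maximalFunction_le (u : ℝ → ℝ≥0∞) (t : ℝ≥0∞) :
    t * volume {x | t < maximalFunction u x} ≤ 4 * ∫⁻ x, u x := by
  rcases eq_or_ne t 0 with rfl | ht0
  · simp
  rcases eq_or_ne t ∞ with rfl | htop
  · simp
  rcases eq_or_ne (∫⁻ x, u x) ∞ with hu | hu
  · simp [hu]
  set S : Set (ℝ × ℝ) := {p | t < (∫⁻ y in Ioc p.1 p.2, u y) / ENNReal.ofReal (p.2 - p.1)}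
  have hS := fun p (hp : p ∈ S) => mul_ofReal_sub_le_lintegral_Ioc_of_lt_div hp
  have hlen (p) (hp : p ∈ S) : p.2 - p.1 ≤ ((∫⁻ x, u x) / t).toReal := by
    refine (ENNReal.ofReal_le_iff_le_toReal (ENNReal.div_ne_top hu ht0)).1 ?_
    rw [ENNReal.le_div_iff_mul_le (.inl ht0) (.inl htop), mul_comm]
    exact (hS p hp).2.trans (setLIntegral_le_lintegral _ _)
  obtain ⟨v, hvS, hv, hvdisj, hvol⟩ :=
    Real.exists_disjoint_subfamily_volume_biUnion_Icc_le S (fun p hp => (hS p hp).1) hlen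
  have hcover : {x | t < maximalFunction u x} ⊆ ⋃ p ∈ S, Icc p.1 p.2 := by
    intro x (hx : t < maximalFunction u x)
    simp only [maximalFunction, lt_iSup_iff] at hx
    obtain ⟨a, hax, b, hxb, hab⟩ := hx
    exact mem_biUnion (x := (a, b)) hab ⟨hax, hxb⟩
  calc t * volume {x | t < maximalFunction u x}
      ≤ t * (4 * ∑' p : v, ENNReal.ofReal (p.1.2 - p.1.1)) := by
        gcongr; exact (measure_mono hcover).trans hvol
    _ = 4 * ∑' p : v, t * ENNReal.ofReal (p.1.2 - p.1.1) := by
        rw [ENNReal.tsum_mul_left]; ring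
    _ ≤ 4 * ∑' p : v, ∫⁻ y in Ioc p.1.1 p.1.2, u y := by
        gcongr with p; exact (hS p (hvS p.2)).2
    _ = 4 * ∫⁻ y in ⋃ p ∈ v, Ioc p.1 p.2, u y := by
        rw [lintegral_biUnion hv (fun _ _ => measurableSet_Ioc)
          (hvdisj.mono fun _ => Ioc_subset_Icc_self)]
    _ ≤ 4 * ∫⁻ x, u x := by gcongr; exact Measure.restrict_le_self

theorem maximalFunction_le_add {u w : ℝ → ℝ≥0∞} {s : ℝ≥0∞} (h : ∀ y, u y ≤ w y + s) (x : ℝ) :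
    maximalFunction u x ≤ maximalFunction w x + s := by
  refine iSup₂_le fun a hax => iSup₂_le fun b hxb => ?_
  calc (∫⁻ y in Ioc a b, u y) / ENNReal.ofReal (b - a)
      ≤ (∫⁻ y in Ioc a b, w y + s) / ENNReal.ofReal (b - a) := by gcongr with y; exact h y
    _ = (∫⁻ y in Ioc a b, w y) / ENNReal.ofReal (b - a) +
          s * (ENNReal.ofReal (b - a) / ENNReal.ofReal (b - a)) := by
        rw [lintegral_add_right _ measurable_const, setLIntegral_const, Real.volume_Ioc,
          ENNReal.add_div, mul_div_assoc]
    _ ≤ maximalFunction w x + s := by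
        gcongr
        · exact lintegral_Ioc_div_le_maximalFunction w hax hxb
        · exact mul_le_of_le_one_right' ENNReal.div_self_le_one

/-- Splitting `u` at height `t / 2`, only the part above it matters for the level `t`. -/
theorem mul_volume_lt_maximalFunction_le_truncated (u : ℝ → ℝ≥0∞) (t : ℝ≥0∞) :
    t * volume {x | t < maximalFunction u x} ≤ 8 * ∫⁻ x, {y | t < 2 * u y}.indicator u x := by
  set w := {y | t < 2 * u y}.indicator u
  have huw (y : ℝ) : u y ≤ w y + t / 2 := by
    by_cases hy : t < 2 * u y
    · simp [w, hy]
    · have : u y ≤ t / 2 := by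
        rw [ENNReal.le_div_iff_mul_le (.inl two_ne_zero) (.inl ENNReal.ofNat_ne_top), mul_comm]
        exact not_lt.1 hy
      exact this.trans le_add_self
  have hsub : {x | t < maximalFunction u x} ⊆ {x | t / 2 < maximalFunction w x} := by
    intro x (hx : t < _)
    refine lt_of_not_ge fun (hwx : maximalFunction w x ≤ t / 2) => hx.not_ge ?_
    exact (maximalFunction_le_add huw x).trans
      ((add_le_add hwx le_rfl).trans (ENNReal.add_halves t).le)
  calc t * volume {x | t < maximalFunction u x}
      = 2 * (t / 2 * volume {x | t < maximalFunction u x}) := by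
        rw [← mul_assoc, ENNReal.mul_div_cancel' (by simp) (by simp)]
    _ ≤ 2 * (t / 2 * volume {x | t / 2 < maximalFunction w x}) := by gcongr
    _ ≤ 2 * (4 * ∫⁻ x, w x) := by gcongr 2 * ?_; exact mul_volume_lt_maximalFunction_le w _
    _ = 8 * ∫⁻ x, w x := by rw [← mul_assoc]; norm_num

theorem volume_ofReal_lt_inter_Ioi (c : ℝ≥0∞) :
    volume ({s : ℝ | ENNReal.ofReal s < c} ∩ Ioi 0) = c := by
  rcases eq_or_ne c ∞ with rfl | hc
  · simp [Real.volume_Ioi]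
  have : {s : ℝ | ENNReal.ofReal s < c} ∩ Ioi 0 = Ioo 0 c.toReal := by
    ext s
    simp only [mem_inter_iff, mem_ofPred_eq, mem_Ioi, mem_Ioo]
    rw [← ENNReal.ofReal_toReal hc, ENNReal.ofReal_lt_ofReal_iff',
      ENNReal.toReal_ofReal ENNReal.toReal_nonneg]
    constructor
    · rintro ⟨⟨h, -⟩, hs⟩; exact ⟨hs, h⟩
    · rintro ⟨hs, h⟩; exact ⟨⟨h, hs.trans h⟩, hs⟩
  rw [this, Real.volume_Ioo, sub_zero, ENNReal.ofReal_toReal hc]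

theorem lintegral_sq_le_of_ofReal_le_maximalFunction {u : ℝ → ℝ≥0∞} (hu : Measurable u)
    {g : ℝ → ℝ} (hg : Measurable g) (hg0 : 0 ≤ g)
    (hgu : ∀ x, ENNReal.ofReal (g x) ≤ maximalFunction u x) :
    ∫⁻ x, ENNReal.ofReal (g x ^ 2) ≤ 32 * ∫⁻ x, u x ^ 2 := by
  set F : ℝ → ℝ → ℝ≥0∞ := fun s x => {y | ENNReal.ofReal s < 2 * u y}.indicator u x
  have hF : Measurable (Function.uncurry F) := by
    simp only [F, Function.uncurry_def, indicator_apply, mem_ofPred_eq]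
    exact Measurable.ite (measurableSet_lt (by fun_prop) (by fun_prop)) (by fun_prop)
      measurable_const
  have htail (s : ℝ) (hs : 0 < s) :
      volume {x | s < g x} * ENNReal.ofReal (2 * s) ≤ 16 * ∫⁻ x, F s x := by
    have hsub : {x | s < g x} ⊆ {x | ENNReal.ofReal s < maximalFunction u x} := fun x hx =>
      ((ENNReal.ofReal_lt_ofReal_iff (hs.trans hx)).2 hx).trans_le (hgu x)
    calc volume {x | s < g x} * ENNReal.ofReal (2 * s)
        ≤ 2 * (ENNReal.ofReal s * volume {x | ENNReal.ofReal s < maximalFunction u x}) := by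
          rw [ENNReal.ofReal_mul zero_le_two, ENNReal.ofReal_ofNat, mul_comm, mul_assoc]
          gcongr
      _ ≤ 2 * (8 * ∫⁻ x, F s x) := by
          gcongr 2 * ?_; exact mul_volume_lt_maximalFunction_le_truncated u _
      _ = 16 * ∫⁻ x, F s x := by rw [← mul_assoc]; norm_num
  have hinner (x : ℝ) : ∫⁻ s in Ioi 0, F s x = 2 * u x ^ 2 := by
    have hFx : (F · x) = {s : ℝ | ENNReal.ofReal s < 2 * u x}.indicator fun _ => u x := by
      ext s; simp only [F, indicator_apply, mem_ofPred_eq]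
    have hmeas : MeasurableSet {s : ℝ | ENNReal.ofReal s < 2 * u x} :=
      measurableSet_lt ENNReal.measurable_ofReal measurable_const
    rw [hFx, lintegral_indicator_const hmeas, Measure.restrict_apply hmeas,
      volume_ofReal_lt_inter_Ioi]
    ring
  calc ∫⁻ x, ENNReal.ofReal (g x ^ 2)
      = ∫⁻ x, ENNReal.ofReal (∫ s in (0 : ℝ)..g x, 2 * s) := by
        congr 1 with x
        rw [intervalIntegral.integral_const_mul, integral_id]
        ring_nf
    _ = ∫⁻ s in Ioi 0, volume {x | s < g x} * ENNReal.ofReal (2 * s) :=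
        lintegral_comp_eq_lintegral_meas_lt_mul _ (.of_forall hg0) hg.aemeasurable
          (fun _ _ => (continuous_const_mul 2).intervalIntegrable _ _)
          (ae_restrict_of_forall_mem measurableSet_Ioi fun s (hs : 0 < s) => by positivity)
    _ ≤ ∫⁻ s in Ioi 0, 16 * ∫⁻ x, F s x := setLIntegral_mono' measurableSet_Ioi htail
    _ = 16 * ∫⁻ x, ∫⁻ s in Ioi 0, F s x := by
        rw [lintegral_const_mul' _ _ (by norm_num), lintegral_lintegral_swap hF.aemeasurable]
    _ = 32 * ∫⁻ x, u x ^ 2 := by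
        simp_rw [hinner]
        rw [lintegral_const_mul' _ _ (by norm_num), ← mul_assoc]
        norm_num

section MaximalSlope

variable {E : Type*} [NormedAddCommGroup E]

noncomputable def maximalSlope (f : ℝ → E) (x : ℝ) : ℝ :=
  ⨆ y : {y : ℝ // y ≠ x}, ‖f x - f y‖ / |x - y|

theorem maximalSlope_nonneg (f : ℝ → E) (x : ℝ) : 0 ≤ maximalSlope f x :=
  Real.iSup_nonneg fun _ => by positivity

theorem LipschitzWith.norm_sub_div_abs_le {K : NNReal} {f : ℝ → E} (hf : LipschitzWith K f)
    (x y : ℝ) : ‖f x - f y‖ / |x - y| ≤ K := by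
  refine div_le_of_le_mul₀ (abs_nonneg _) K.2 ?_
  simpa [dist_eq_norm, Real.dist_eq] using hf.dist_le_mul x y

theorem LipschitzWith.lowerSemicontinuous_maximalSlope {K : NNReal} {f : ℝ → E}
    (hf : LipschitzWith K f) : LowerSemicontinuous (maximalSlope f) := by
  intro x τ hτ
  have hbdd (z : ℝ) : BddAbove (range fun y : {y : ℝ // y ≠ z} => ‖f z - f y‖ / |z - y|) :=
    ⟨K, by rintro _ ⟨y, rfl⟩; exact hf.norm_sub_div_abs_le z y⟩
  have : Nonempty {y : ℝ // y ≠ x} := ⟨⟨x + 1, by simp⟩⟩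
  obtain ⟨⟨y, hyx⟩, hy⟩ := exists_lt_of_lt_ciSup hτ
  have hcont : ContinuousAt (fun z => ‖f z - f y‖ / |z - y|) x :=
    (hf.continuous.sub continuous_const).norm.continuousAt.div
      (continuous_id.sub continuous_const).abs.continuousAt (by simpa [sub_eq_zero] using hyx.symm)
  filter_upwards [hcont.eventually (lt_mem_nhds hy), eventually_ne_nhds hyx.symm] with z hz hzy
  exact hz.trans_le (le_ciSup (hbdd z) ⟨y, hzy.symm⟩)

variable [NormedSpace ℝ E] [CompleteSpace E]

/-- The fundamental theorem of calculus bounds each difference quotient by an average of `‖f'‖`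
over an interval with `x` as an endpoint. -/
theorem ofReal_norm_sub_div_abs_le_maximalFunction {f : ℝ → E} (hf : Differentiable ℝ f)
    (hf' : Continuous (deriv f)) (x y : ℝ) :
    ENNReal.ofReal (‖f x - f y‖ / |x - y|) ≤ maximalFunction (fun z => ‖deriv f z‖ₑ) x := by
  rcases eq_or_ne x y with rfl | hxy
  · simp
  have hftc : f x - f y = ∫ z in y..x, deriv f z :=
    (intervalIntegral.integral_deriv_eq_sub (fun z _ => hf z) (hf'.intervalIntegrable y x)).symm
  have hnorm : ‖f x - f y‖ₑ ≤ ∫⁻ z in uIoc y x, ‖deriv f z‖ₑ := by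
    rw [hftc, ← ofReal_norm, intervalIntegral.norm_integral_eq_norm_integral_uIoc, ofReal_norm]
    exact enorm_integral_le_lintegral_enorm _
  calc ENNReal.ofReal (‖f x - f y‖ / |x - y|)
      = ‖f x - f y‖ₑ / ENNReal.ofReal (max y x - min y x) := by
        rw [ENNReal.ofReal_div_of_pos (abs_pos.2 (sub_ne_zero.2 hxy)), ofReal_norm,
          max_sub_min_eq_abs]
    _ ≤ (∫⁻ z in Ioc (min y x) (max y x), ‖deriv f z‖ₑ) / ENNReal.ofReal (max y x - min y x) := by
        gcongr; exact hnorm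
    _ ≤ maximalFunction (fun z => ‖deriv f z‖ₑ) x :=
        lintegral_Ioc_div_le_maximalFunction _ (min_le_right y x) (le_max_right y x)

theorem ofReal_maximalSlope_le_maximalFunction {f : ℝ → E} (hf : Differentiable ℝ f)
    (hf' : Continuous (deriv f)) (x : ℝ) :
    ENNReal.ofReal (maximalSlope f x) ≤ maximalFunction (fun z => ‖deriv f z‖ₑ) x := by
  rcases eq_or_ne (maximalFunction (fun z => ‖deriv f z‖ₑ) x) ∞ with h | h
  · simp [h]
  rw [ENNReal.ofReal_le_iff_le_toReal h]
  exact Real.iSup_le (fun y => (ENNReal.ofReal_le_iff_le_toReal h).1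
    (ofReal_norm_sub_div_abs_le_maximalFunction hf hf' x y)) ENNReal.toReal_nonneg

end MaximalSlope

theorem integrable_sq_and_integral_sq_le {α : Type*} [MeasurableSpace α] {μ : Measure α}
    {g h : α → ℝ} (hg : AEStronglyMeasurable g μ) (hh : Integrable (fun x => h x ^ 2) μ) {C : ℝ}
    (hC : 0 ≤ C)
    (hgh : ∫⁻ x, ENNReal.ofReal (g x ^ 2) ∂μ ≤
      ENNReal.ofReal C * ∫⁻ x, ENNReal.ofReal (h x ^ 2) ∂μ) :
    Integrable (fun x => g x ^ 2) μ ∧ ∫ x, g x ^ 2 ∂μ ≤ C * ∫ x, h x ^ 2 ∂μ := by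
  have hsq {k : α → ℝ} : 0 ≤ᵐ[μ] fun x => k x ^ 2 := .of_forall fun x => sq_nonneg (k x)
  have hfin : ∫⁻ x, ENNReal.ofReal (h x ^ 2) ∂μ < ∞ := (hasFiniteIntegral_iff_ofReal hsq).1 hh.2
  have hgfin := hgh.trans_lt (ENNReal.mul_lt_top ENNReal.ofReal_lt_top hfin)
  refine ⟨⟨hg.pow 2, (hasFiniteIntegral_iff_ofReal hsq).2 hgfin⟩, ?_⟩
  rw [integral_eq_lintegral_of_nonneg_ae hsq (hg.pow 2),
    integral_eq_lintegral_of_nonneg_ae hsq hh.1, ← ENNReal.toReal_ofReal hC, ← ENNReal.toReal_mul]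
  exact ENNReal.toReal_mono (ENNReal.mul_ne_top ENNReal.ofReal_ne_top hfin.ne) hgh

/-- For Schwartz `f`, the maximal difference-quotient function
`α ↦ sup_{β ≠ α} |(f(α) − f(β))/(α − β)|` is in `L²(ℝ)` with norm `≲ ‖f'‖_{L²}`. -/
theorem maximal_difference_quotient_L2 :
    ∃ C : ℝ, 0 < C ∧ ∀ f : SchwartzMap ℝ ℂ,
      MemLp (fun α : ℝ =>
          ⨆ β : {b : ℝ // b ≠ α}, ‖(f α - f (β : ℝ)) / (((α - (β : ℝ) : ℝ)) : ℂ)‖) 2 volume ∧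
      Real.sqrt (∫ α : ℝ,
          (⨆ β : {b : ℝ // b ≠ α}, ‖(f α - f (β : ℝ)) / (((α - (β : ℝ) : ℝ)) : ℂ)‖) ^ 2)
        ≤ C * Real.sqrt (∫ x : ℝ, ‖deriv (⇑f) x‖ ^ 2) := by
  refine ⟨6, by norm_num, fun f => ?_⟩
  simp only [norm_div, Complex.norm_real, Real.norm_eq_abs]
  change MemLp (maximalSlope f) 2 volume ∧ √(∫ α, maximalSlope f α ^ 2) ≤ _
  set f' := SchwartzMap.derivCLM ℝ ℂ f
  have hf' : ⇑f' = deriv f := funext (SchwartzMap.derivCLM_apply ℝ f)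
  have hlip : LipschitzWith (SchwartzMap.seminorm ℝ 0 0 f').toNNReal f :=
    lipschitzWith_of_nnnorm_deriv_le f.differentiable fun x => by
      rw [← NNReal.coe_le_coe, coe_nnnorm, Real.coe_toNNReal _ (apply_nonneg _ _), ← hf']
      exact SchwartzMap.norm_le_seminorm ℝ f' x
  have hmeas := hlip.lowerSemicontinuous_maximalSlope.measurable
  have hL2 := lintegral_sq_le_of_ofReal_le_maximalFunction (by fun_prop) hmeas
    (maximalSlope_nonneg f)
    (ofReal_maximalSlope_le_maximalFunction f.differentiable (hf' ▸ f'.continuous))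
  simp_rw [← ofReal_norm, ← ENNReal.ofReal_pow (norm_nonneg _), ← hf'] at hL2
  obtain ⟨hint, hle⟩ := integrable_sq_and_integral_sq_le hmeas.aestronglyMeasurable
    ((f'.memLp 2).integrable_norm_pow two_ne_zero) (C := 32) (by norm_num) (by simpa using hL2)
  refine ⟨(memLp_two_iff_integrable_sq hmeas.aestronglyMeasurable).2 hint, ?_⟩
  calc √(∫ α, maximalSlope f α ^ 2) ≤ √32 * √(∫ x, ‖f' x‖ ^ 2) := by
        rw [← Real.sqrt_mul (by norm_num)]; exact Real.sqrt_le_sqrt hle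
    _ ≤ 6 * √(∫ x, ‖deriv f x‖ ^ 2) := by
        rw [hf']; gcongr
        rw [Real.sqrt_le_left (by norm_num)]; norm_num
end

section
/- For every f in the Schwartz space on ℝ and every α ∈ ℝ, one has ∫ |(f(α) − f(β))/(α − β)|² dβ ≤ C ‖f'‖_{L²}² for a universal constant C. -/
open MeasureTheory Set
open scoped ENNReal

/-! Hardy's inequality. The slope is `∫₀¹ f'(α + t(β - α)) dt`; Cauchy–Schwarz against the weight
`t^(-1/2)`, whose integral over `(0, 1]` is `2`, bounds its square by
`2 ∫₀¹ √t ‖f'(α + t(β - α))‖² dt`. Integrating in `β` first, the substitution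
`x = α + t(β - α)` contributes a factor `1/t`, which leaves `2 ∫₀¹ t^(-1/2) dt ‖f'‖₂² = 4 ‖f'‖₂²`. -/

theorem ENNReal.sq_lintegral_mul_le {X : Type*} [MeasurableSpace X] {μ : Measure X}
    {F G : X → ℝ≥0∞} (hF : AEMeasurable F μ) (hG : AEMeasurable G μ) :
    (∫⁻ x, F x * G x ∂μ) ^ 2 ≤ (∫⁻ x, F x ^ 2 ∂μ) * ∫⁻ x, G x ^ 2 ∂μ := by
  have h := ENNReal.lintegral_mul_le_Lp_mul_Lq μ Real.HolderConjugate.two_two hF hG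
  simp only [Pi.mul_apply, ENNReal.rpow_two] at h
  calc (∫⁻ x, F x * G x ∂μ) ^ 2
      ≤ ((∫⁻ x, F x ^ 2 ∂μ) ^ (1 / 2 : ℝ) * (∫⁻ x, G x ^ 2 ∂μ) ^ (1 / 2 : ℝ)) ^ 2 := by
        gcongr
    _ = (∫⁻ x, F x ^ 2 ∂μ) * ∫⁻ x, G x ^ 2 ∂μ := by
        rw [mul_pow, ← ENNReal.rpow_two, ← ENNReal.rpow_two, ← ENNReal.rpow_mul,
          ← ENNReal.rpow_mul]
        norm_num

theorem lintegral_Ioc_zero_one_rpow_neg_half :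
    ∫⁻ t in Ioc (0 : ℝ) 1, ENNReal.ofReal (t ^ (-(1 / 2) : ℝ)) = 2 := by
  have hint : IntegrableOn (fun t : ℝ ↦ t ^ (-(1 / 2) : ℝ)) (Ioc 0 1) := by
    rw [← intervalIntegrable_iff_integrableOn_Ioc_of_le zero_le_one]
    exact intervalIntegral.intervalIntegrable_rpow' (by norm_num)
  rw [← ofReal_integral_eq_lintegral_ofReal hint
    (ae_restrict_of_forall_mem measurableSet_Ioc fun t ht ↦ Real.rpow_nonneg ht.1.le _),
    ← intervalIntegral.integral_of_le zero_le_one, integral_rpow (Or.inl (by norm_num)),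
    Real.zero_rpow (by norm_num), Real.one_rpow]
  norm_num

theorem sq_lintegral_Ioc_zero_one_le {g : ℝ → ℝ≥0∞}
    (hg : AEMeasurable g (volume.restrict (Ioc 0 1))) :
    (∫⁻ t in Ioc (0 : ℝ) 1, g t) ^ 2
      ≤ 2 * ∫⁻ t in Ioc (0 : ℝ) 1, ENNReal.ofReal (t ^ (1 / 2 : ℝ)) * g t ^ 2 := by
  set F : ℝ → ℝ≥0∞ := fun t ↦ ENNReal.ofReal (t ^ (-(1 / 4) : ℝ))
  set G : ℝ → ℝ≥0∞ := fun t ↦ ENNReal.ofReal (t ^ (1 / 4 : ℝ)) * g t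
  have hFG : ∀ t ∈ Ioc (0 : ℝ) 1, F t * G t = g t := fun t ht ↦ by
    rw [← mul_assoc, ← ENNReal.ofReal_mul (Real.rpow_nonneg ht.1.le _), ← Real.rpow_add ht.1]
    norm_num
  have hF : ∀ t ∈ Ioc (0 : ℝ) 1, F t ^ 2 = ENNReal.ofReal (t ^ (-(1 / 2) : ℝ)) := fun t ht ↦ by
    rw [← ENNReal.ofReal_pow (Real.rpow_nonneg ht.1.le _), ← Real.rpow_mul_natCast ht.1.le]
    norm_num
  have hG : ∀ t ∈ Ioc (0 : ℝ) 1, G t ^ 2 = ENNReal.ofReal (t ^ (1 / 2 : ℝ)) * g t ^ 2 :=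
    fun t ht ↦ by
      rw [mul_pow, ← ENNReal.ofReal_pow (Real.rpow_nonneg ht.1.le _),
        ← Real.rpow_mul_natCast ht.1.le]
      norm_num
  have hCS := ENNReal.sq_lintegral_mul_le (μ := volume.restrict (Ioc 0 1))
    (F := F) (G := G) (by fun_prop) (by fun_prop)
  rwa [setLIntegral_congr_fun measurableSet_Ioc hFG, setLIntegral_congr_fun measurableSet_Ioc hF,
    setLIntegral_congr_fun measurableSet_Ioc hG, lintegral_Ioc_zero_one_rpow_neg_half] at hCS

theorem lintegral_comp_homothety {g : ℝ → ℝ≥0∞} (hg : Measurable g) (α : ℝ) {t : ℝ}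
    (ht : 0 < t) : ∫⁻ β, g (α + t * (β - α)) = ENNReal.ofReal t⁻¹ * ∫⁻ x, g x := by
  have hshift : Measurable fun x ↦ g (x + (α - t * α)) := hg.comp (measurable_add_const _)
  calc ∫⁻ β, g (α + t * (β - α)) = ∫⁻ β, (fun x ↦ g (x + (α - t * α))) (t * β) := by
        simp_rw [show ∀ β, α + t * (β - α) = t * β + (α - t * α) from fun β ↦ by ring]
    _ = ENNReal.ofReal t⁻¹ * ∫⁻ x, g x := by
        rw [← lintegral_map hshift (measurable_const_mul t), Real.map_volume_mul_left ht.ne',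
          lintegral_smul_measure, lintegral_add_right_eq_self g, abs_of_pos (inv_pos.mpr ht),
          smul_eq_mul]

theorem integral_norm_sq_eq_toReal_lintegral {X F : Type*} [MeasurableSpace X] {μ : Measure X}
    [NormedAddCommGroup F] {g : X → F} (hg : AEStronglyMeasurable g μ) :
    ∫ x, ‖g x‖ ^ 2 ∂μ = (∫⁻ x, ‖g x‖ₑ ^ 2 ∂μ).toReal := by
  rw [← integral_toReal (hg.enorm.pow_const 2) (ae_of_all _ fun _ ↦ by simp)]
  simp

section slope

variable {E : Type*} [NormedAddCommGroup E] [NormedSpace ℝ E] [CompleteSpace E] {f : ℝ → E}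

theorem slope_eq_intervalIntegral_deriv (hf : ContDiff ℝ 1 f) {α β : ℝ} (hαβ : α ≠ β) :
    slope f α β = ∫ t in (0 : ℝ)..1, deriv f (α + t * (β - α)) := by
  have hFTC : ∫ x in α..β, deriv f x = f β - f α :=
    intervalIntegral.integral_deriv_eq_sub (fun x _ ↦ hf.differentiable one_ne_zero x)
      ((hf.continuous_deriv le_rfl).intervalIntegrable _ _)
  have hscale := intervalIntegral.smul_integral_comp_add_mul (deriv f) (a := 0) (b := 1)
    (β - α) α
  simp only [mul_zero, add_zero, mul_one, add_sub_cancel, hFTC] at hscale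
  rw [slope_def_module, ← hscale, inv_smul_smul₀ (sub_ne_zero.mpr hαβ.symm)]
  simp only [mul_comm]

theorem enorm_slope_le_lintegral_enorm_deriv (hf : ContDiff ℝ 1 f) (α β : ℝ) :
    ‖slope f α β‖ₑ ≤ ∫⁻ t in Ioc (0 : ℝ) 1, ‖deriv f (α + t * (β - α))‖ₑ := by
  rcases eq_or_ne α β with rfl | hαβ
  · simp
  rw [slope_eq_intervalIntegral_deriv hf hαβ, intervalIntegral.integral_of_le zero_le_one]
  exact enorm_integral_le_lintegral_enorm _

theorem lintegral_enorm_slope_sq_le (hf : ContDiff ℝ 1 f) (α : ℝ) :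
    ∫⁻ β, ‖slope f α β‖ₑ ^ 2 ≤ 4 * ∫⁻ x, ‖deriv f x‖ₑ ^ 2 := by
  have hcont : Continuous (deriv f) := hf.continuous_deriv le_rfl
  set w : ℝ → ℝ≥0∞ := fun t ↦ ENNReal.ofReal (t ^ (1 / 2 : ℝ))
  set I := ∫⁻ x, ‖deriv f x‖ₑ ^ 2
  have hrescale : ∀ t ∈ Ioc (0 : ℝ) 1,
      ∫⁻ β, w t * ‖deriv f (α + t * (β - α))‖ₑ ^ 2 = ENNReal.ofReal (t ^ (-(1 / 2) : ℝ)) * I :=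
    fun t ht ↦ by
      rw [lintegral_const_mul' _ _ ENNReal.ofReal_ne_top,
        lintegral_comp_homothety (g := fun x ↦ ‖deriv f x‖ₑ ^ 2)
          (hcont.enorm.measurable.pow_const 2) α ht.1, ← mul_assoc,
        ← ENNReal.ofReal_mul (Real.rpow_nonneg ht.1.le _), ← Real.rpow_neg_one t,
        ← Real.rpow_add ht.1]
      norm_num [I]
  calc ∫⁻ β, ‖slope f α β‖ₑ ^ 2
      ≤ ∫⁻ β, 2 * ∫⁻ t in Ioc (0 : ℝ) 1, w t * ‖deriv f (α + t * (β - α))‖ₑ ^ 2 := by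
        refine lintegral_mono fun β ↦ ?_
        grw [enorm_slope_le_lintegral_enorm_deriv hf α β]
        exact sq_lintegral_Ioc_zero_one_le (by fun_prop)
    _ = 2 * ∫⁻ t in Ioc (0 : ℝ) 1, ∫⁻ β, w t * ‖deriv f (α + t * (β - α))‖ₑ ^ 2 := by
        rw [lintegral_const_mul' _ _ (by simp), lintegral_lintegral_swap (by fun_prop)]
    _ = 2 * ∫⁻ t in Ioc (0 : ℝ) 1, ENNReal.ofReal (t ^ (-(1 / 2) : ℝ)) * I := by
        rw [setLIntegral_congr_fun measurableSet_Ioc hrescale]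
    _ = 4 * I := by
        rw [lintegral_mul_const _ (by fun_prop), lintegral_Ioc_zero_one_rpow_neg_half, ← mul_assoc]
        norm_num

theorem integral_norm_slope_sq_le (hf : ContDiff ℝ 1 f) (hf' : MemLp (deriv f) 2) (α : ℝ) :
    ∫ β, ‖slope f α β‖ ^ 2 ≤ 4 * ∫ x, ‖deriv f x‖ ^ 2 := by
  have hslope : AEStronglyMeasurable (slope f α) :=
    (measurable_id.sub_const α).inv.aestronglyMeasurable.smul
      (hf.continuous.sub continuous_const).aestronglyMeasurable
  have hfinite : ∫⁻ x, ‖deriv f x‖ₑ ^ 2 ≠ ⊤ := by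
    simpa using (lintegral_rpow_enorm_lt_top_of_eLpNorm_lt_top two_ne_zero ENNReal.ofNat_ne_top
      hf'.eLpNorm_lt_top).ne
  rw [integral_norm_sq_eq_toReal_lintegral hslope, integral_norm_sq_eq_toReal_lintegral hf'.1,
    ← ENNReal.toReal_ofNat 4, ← ENNReal.toReal_mul]
  exact ENNReal.toReal_mono (ENNReal.mul_ne_top (by simp) hfinite)
    (lintegral_enorm_slope_sq_le hf α)

end slope

/-- For Schwartz `f` and every `α`,
`∫ |(f(α) − f(β))/(α − β)|² dβ ≤ C ‖f'‖_{L²}²` for a universal constant `C`. -/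
theorem difference_quotient_sq_integral_bound :
    ∃ C : ℝ, 0 < C ∧ ∀ f : SchwartzMap ℝ ℂ, ∀ α : ℝ,
      (∫ β : ℝ, ‖(f α - f β) / (((α - β : ℝ)) : ℂ)‖ ^ 2)
        ≤ C * ∫ x : ℝ, ‖deriv (⇑f) x‖ ^ 2 := by
  refine ⟨4, by norm_num, fun f α ↦ ?_⟩
  have hderiv : MemLp (deriv f) 2 := by
    simpa only [← funext (SchwartzMap.derivCLM_apply ℝ f)] using
      (SchwartzMap.derivCLM ℝ ℂ f).memLp 2
  have hslope : ∀ β : ℝ, (f α - f β) / ((α - β : ℝ) : ℂ) = slope f α β := fun β ↦ by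
    rw [slope_def_module, Complex.real_smul, ← neg_sub β α, ← neg_sub (f β) (f α),
      Complex.ofReal_neg, neg_div_neg_eq, div_eq_inv_mul, Complex.ofReal_inv]
  simpa only [hslope] using integral_norm_slope_sq_le (f.smooth 1) hderiv α
end

section
/- Let f, g be smooth functions on the circle 𝕊¹ and let H̃ denote the conjugate-function (Hilbert) transform on the circle. Then [f², H̃] ∂g − 2[f, H̃] ∂(fg) = −[f, f; g], where [f, f; g](α) = −(1/(4πi)) ∫₀^{2π} ((f(α) − f(β))/sin((β−α)/2))² g(β) dβ. -/
open MeasureTheory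

/-- The commutator `[h, H̃]φ` of multiplication by `h` with the conjugate-function (Hilbert)
transform on the circle, `(H̃φ)(α) = (1/(2πi)) p.v.∫₀^{2π} φ(β) cot((β−α)/2) dβ`, written as the
(absolutely convergent) integral
`([h, H̃]φ)(α) = (1/(2πi)) ∫₀^{2π} (h(α) − h(β)) cot((β−α)/2) φ(β) dβ`. -/
noncomputable def commHtilde (h φ : ℝ → ℂ) (α : ℝ) : ℂ :=
  (1 / (2 * (Real.pi : ℂ) * Complex.I)) *
    ∫ β in (0:ℝ)..(2 * Real.pi),
      (h α - h β) * ((Real.cos ((β - α) / 2) / Real.sin ((β - α) / 2) : ℝ) : ℂ) * φ β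

/-- `[f, f; g](α) = −(1/(4πi)) ∫₀^{2π} ((f(α) − f(β))/sin((β−α)/2))² g(β) dβ`. -/
noncomputable def doubleDiff (f₁ f₂ g : ℝ → ℂ) (α : ℝ) : ℂ :=
  -(1 / (4 * (Real.pi : ℂ) * Complex.I)) *
    ∫ β in (0:ℝ)..(2 * Real.pi),
      ((f₁ α - f₁ β) / ((Real.sin ((β - α) / 2) : ℝ) : ℂ)) *
      ((f₂ α - f₂ β) / ((Real.sin ((β - α) / 2) : ℝ) : ℂ)) * g β

open Real Set intervalIntegral Filter

lemma bdd_of_periodic {F : ℝ → ℂ} (hc : Continuous F) (hp : Function.Periodic F (2 * π)) :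
    ∃ M, 0 ≤ M ∧ ∀ x, ‖F x‖ ≤ M := by
  obtain ⟨M, hM⟩ := (isCompact_Icc (a := (0:ℝ)) (b := 2*π)).exists_bound_of_continuousOn
    hc.continuousOn
  refine ⟨max M 0, le_max_right _ _, fun x => ?_⟩
  obtain ⟨y, hy, hxy⟩ := hp.exists_mem_Ico₀ (by positivity) x
  rw [hxy]
  exact le_trans (hM y ⟨hy.1, hy.2.le⟩) (le_max_left _ _)

lemma deriv_periodic {F : ℝ → ℂ} (hp : Function.Periodic F (2 * π)) :
    Function.Periodic (deriv F) (2 * π) := by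
  intro x
  have h1 : (fun y => F (y + 2 * π)) = F := funext fun y => hp y
  have h2 : deriv (fun y => F (y + 2 * π)) x = deriv F (x + 2 * π) :=
    deriv_comp_add_const F (2 * π) x
  rw [← h2, h1]

lemma jordan {t : ℝ} (ht : |t| ≤ π / 2) : |t| ≤ π / 2 * |Real.sin t| := by
  have h1 : 2 / π * |t| ≤ Real.sin |t| := Real.mul_le_sin (abs_nonneg t) ht
  have h2 : Real.sin |t| ≤ |Real.sin t| := by
    rcases abs_cases t with ⟨h, _⟩ | ⟨h, _⟩
    · rw [h]; exact le_abs_self _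
    · rw [h, Real.sin_neg]; exact neg_le_abs _
  have hπ : 0 < π := Real.pi_pos
  have h3 := mul_le_mul_of_nonneg_left h1 (by positivity : (0:ℝ) ≤ π / 2)
  have h4 : π / 2 * (2 / π * |t|) = |t| := by field_simp
  nlinarith [abs_nonneg (Real.sin t)]

lemma key_bound {F : ℝ → ℂ} (hF : ContDiff ℝ (⊤ : ℕ∞) F) (hp : Function.Periodic F (2 * π)) (α : ℝ) :
    ∃ L, 0 ≤ L ∧ ∀ β, ‖F α - F β‖ ≤ L * |Real.sin ((β - α) / 2)| := by
  have hdc : Continuous (deriv F) := hF.continuous_deriv (by simp)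
  obtain ⟨M, hM0, hM⟩ := bdd_of_periodic hdc (deriv_periodic hp)
  have lip : ∀ x y : ℝ, ‖F x - F y‖ ≤ M * ‖x - y‖ := fun x y =>
    Convex.norm_image_sub_le_of_norm_deriv_le
      (fun z _ => (hF.differentiable (by simp)).differentiableAt)
      (fun z _ => hM z) convex_univ (mem_univ y) (mem_univ x)
  refine ⟨M * π, by positivity, fun β => ?_⟩
  set k : ℤ := round ((β - α) / (2 * π)) with hk
  set r : ℝ := β - α - 2 * π * k with hr
  have hπ : 0 < π := Real.pi_pos
  have hβ : β = (α + r) + k * (2 * π) := by rw [hr]; push_cast; ring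
  have hFβ : F β = F (α + r) := by rw [hβ]; exact (hp.int_mul k) (α + r)
  have hrabs : |r| ≤ π := by
    have h := abs_sub_round ((β - α) / (2 * π))
    have : r = 2 * π * ((β - α) / (2 * π) - k) := by
      rw [hr]; field_simp
    rw [this, abs_mul, abs_of_pos (by positivity : (0:ℝ) < 2 * π)]
    nlinarith
  have hsin : |Real.sin ((β - α) / 2)| = |Real.sin (r / 2)| := by
    have : (β - α) / 2 = r / 2 + k * π := by rw [hr]; push_cast; ring
    rw [this, Real.sin_add_int_mul_pi, abs_mul]
    rcases Int.even_or_odd k with hk2 | hk2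
    · rw [hk2.neg_one_zpow]; simp
    · rw [hk2.neg_one_zpow]; simp
  have hjord : |r / 2| ≤ π / 2 * |Real.sin (r / 2)| := by
    apply jordan
    rw [abs_div, abs_of_pos (by norm_num : (0:ℝ) < 2)]
    linarith [hrabs]
  calc ‖F α - F β‖ = ‖F (α + r) - F α‖ := by rw [hFβ, norm_sub_rev]
    _ ≤ M * ‖(α + r) - α‖ := lip _ _
    _ = M * |r| := by norm_num [Real.norm_eq_abs]
    _ ≤ M * (π * |Real.sin (r / 2)|) := by
        apply mul_le_mul_of_nonneg_left _ hM0
        rw [abs_div, abs_of_pos (by norm_num : (0:ℝ) < 2)] at hjord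
        linarith
    _ = M * π * |Real.sin ((β - α) / 2)| := by rw [hsin]; ring
example (x y : ℂ) : (1/(2*x*y)) * (1/2) = 1/(4*x*y) := by ring

lemma norm_mul_ct_le (α β : ℝ) {X : ℂ} {L : ℝ} (hL : 0 ≤ L)
    (h : ‖X‖ ≤ L * |Real.sin ((β - α) / 2)|) :
    ‖X * ((Real.cos ((β - α) / 2) / Real.sin ((β - α) / 2) : ℝ) : ℂ)‖ ≤ L := by
  rw [norm_mul, Complex.norm_real, Real.norm_eq_abs, abs_div]
  rcases eq_or_ne (Real.sin ((β - α) / 2)) 0 with hs | hs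
  · simp [hs]; exact hL
  · have hs' : 0 < |Real.sin ((β - α) / 2)| := abs_pos.2 hs
    have hc : |Real.cos ((β - α) / 2)| ≤ 1 := Real.abs_cos_le_one _
    calc ‖X‖ * (|Real.cos ((β - α) / 2)| / |Real.sin ((β - α) / 2)|)
        ≤ (L * |Real.sin ((β - α) / 2)|) * (|Real.cos ((β - α) / 2)| / |Real.sin ((β - α) / 2)|) :=
          mul_le_mul_of_nonneg_right h (by positivity)
      _ = L * |Real.cos ((β - α) / 2)| := by field_simp
      _ ≤ L := by nlinarith

lemma norm_div_sin_le (α β : ℝ) {X : ℂ} {L : ℝ} (hL : 0 ≤ L)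
    (h : ‖X‖ ≤ L * |Real.sin ((β - α) / 2)|) :
    ‖X / ((Real.sin ((β - α) / 2) : ℝ) : ℂ)‖ ≤ L := by
  rw [norm_div, Complex.norm_real, Real.norm_eq_abs]
  rcases eq_or_ne (Real.sin ((β - α) / 2)) 0 with hs | hs
  · simp [hs]; exact hL
  · rw [div_le_iff₀ (abs_pos.2 hs)]; exact h

lemma intInt_of_bound {F : ℝ → ℂ} {C : ℝ} (hm : AEStronglyMeasurable F volume)
    (h : ∀ t, ‖F t‖ ≤ C) (a b : ℝ) : IntervalIntegrable F volume a b := by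
  rw [intervalIntegrable_iff]
  exact Integrable.mono' (integrableOn_const measure_Ioc_lt_top.ne) hm.restrict
    (ae_of_all _ h)

lemma hasDerivAt_ct (α : ℝ) {β : ℝ} (hs : Real.sin ((β - α) / 2) ≠ 0) :
    HasDerivAt (fun x => Real.cos ((x - α) / 2) / Real.sin ((x - α) / 2))
      (-1 / (2 * Real.sin ((β - α) / 2) ^ 2)) β := by
  have hin : HasDerivAt (fun x : ℝ => (x - α) / 2) (1 / 2) β := by
    simpa using ((hasDerivAt_id β).sub_const α).div_const 2
  have hsin : HasDerivAt (fun x => Real.sin ((x - α) / 2)) (Real.cos ((β - α) / 2) * (1 / 2)) β :=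
    (Real.hasDerivAt_sin _).comp β hin
  have hcos : HasDerivAt (fun x => Real.cos ((x - α) / 2)) (-Real.sin ((β - α) / 2) * (1 / 2)) β :=
    (Real.hasDerivAt_cos _).comp β hin
  have hd := hcos.div hsin hs
  refine hd.congr_deriv ?_
  have h1 := Real.sin_sq_add_cos_sq ((β - α) / 2)
  rw [div_eq_div_iff (pow_ne_zero 2 hs) (mul_ne_zero two_ne_zero (pow_ne_zero 2 hs))]
  linear_combination -(Real.sin ((β - α) / 2)) ^ 2 * h1

section defs
noncomputable def uu (α β : ℝ) : ℂ := ((Real.cos ((β - α) / 2) / Real.sin ((β - α) / 2) : ℝ) : ℂ)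
noncomputable def ss (α β : ℝ) : ℝ := Real.sin ((β - α) / 2)
noncomputable def II1 (f g : ℝ → ℂ) (α β : ℝ) : ℂ := (f α ^ 2 - f β ^ 2) * uu α β * deriv g β
noncomputable def II2 (f g : ℝ → ℂ) (α β : ℝ) : ℂ :=
  (f α - f β) * uu α β * deriv (fun x => f x * g x) β
noncomputable def QQ (f g : ℝ → ℂ) (α β : ℝ) : ℂ :=
  ((f α - f β) / (ss α β : ℂ)) * ((f α - f β) / (ss α β : ℂ)) * g β
noncomputable def HH (f g : ℝ → ℂ) (α β : ℝ) : ℂ := (f α - f β) ^ 2 * uu α β * g β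
noncomputable def HHd (f g : ℝ → ℂ) (α β : ℝ) : ℂ :=
  II1 f g α β - 2 * II2 f g α β - (1 / 2 : ℂ) * QQ f g α β
end defs

section lems
variable {f g : ℝ → ℂ} {α : ℝ}

lemma hasDerivAt_HH (hf : ContDiff ℝ (⊤ : ℕ∞) f) (hg : ContDiff ℝ (⊤ : ℕ∞) g) {β : ℝ} (hs : ss α β ≠ 0) :
    HasDerivAt (HH f g α) (HHd f g α β) β := by
  have hs' : ((ss α β : ℝ) : ℂ) ≠ 0 := Complex.ofReal_ne_zero.2 hs
  have hgd : HasDerivAt g (deriv g β) β := (hg.differentiable (by simp) β).hasDerivAt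
  have hD : HasDerivAt (fun x => f α - f x) (-deriv f β) β :=
    ((hf.differentiable (by simp) β).hasDerivAt).const_sub (f α)
  have hu : HasDerivAt (fun x => uu α x) (((-1 / (2 * ss α β ^ 2) : ℝ) : ℂ)) β := by
    unfold uu ss at *
    exact (hasDerivAt_ct α hs).ofReal_comp
  have hH := ((hD.mul hD).mul hu).mul hgd
  have hfg : deriv (fun x => f x * g x) β = deriv f β * g β + f β * deriv g β :=
    deriv_mul (hf.differentiable (by simp) β) (hg.differentiable (by simp) β)
  have e : HH f g α = (((fun x => f α - f x) * fun x => f α - f x) * fun x => uu α x) * g := by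
    funext x; simp only [Pi.mul_apply]; unfold HH; ring
  rw [e]
  refine hH.congr_deriv ?_
  symm
  simp only [Pi.mul_apply]
  · unfold HHd II1 II2 QQ
    rw [hfg]
    push_cast
    field_simp
    ring

lemma continuousAt_HH (hf : ContDiff ℝ (⊤ : ℕ∞) f) (hg : ContDiff ℝ (⊤ : ℕ∞) g)
    (hfp : Function.Periodic f (2 * π)) (β : ℝ) : ContinuousAt (HH f g α) β := by
  rcases eq_or_ne (ss α β) 0 with hs | hs
  · obtain ⟨L1, hL10, hL1⟩ := key_bound hf hfp α
    have hbd : ∀ t, ‖HH f g α t‖ ≤ ‖f α - f t‖ * L1 * ‖g t‖ := by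
      intro t
      have h1 : ‖(f α - f t) * uu α t‖ ≤ L1 := norm_mul_ct_le α t hL10 (hL1 t)
      calc ‖HH f g α t‖ = ‖f α - f t‖ * ‖(f α - f t) * uu α t‖ * ‖g t‖ := by
            rw [show HH f g α t = (f α - f t) * ((f α - f t) * uu α t) * g t from by
              unfold HH; ring, norm_mul, norm_mul]
        _ ≤ ‖f α - f t‖ * L1 * ‖g t‖ := by gcongr
    have htend : Filter.Tendsto (fun t => ‖f α - f t‖ * L1 * ‖g t‖) (nhds β)
        (nhds (‖f α - f β‖ * L1 * ‖g β‖)) :=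
      (((continuous_const.sub hf.continuous).norm.mul continuous_const).mul
        hg.continuous.norm).tendsto β
    have hfβ : f β = f α := by
      unfold ss at hs
      obtain ⟨n, hn⟩ := Real.sin_eq_zero_iff.1 hs
      have hβ : β = α + n * (2 * π) := by linarith [hn]
      rw [hβ]; exact (hfp.int_mul n) α
    rw [hfβ, sub_self, norm_zero, zero_mul, zero_mul] at htend
    have hH0 : HH f g α β = 0 := by
      unfold ss at hs
      unfold HH uu
      rw [hs]
      simp
    rw [ContinuousAt, hH0]
    exact squeeze_zero_norm hbd htend
  · unfold HH uu
    apply ContinuousAt.mul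
    apply ContinuousAt.mul
    · exact ((continuous_const.sub hf.continuous).pow 2).continuousAt
    · apply Complex.continuous_ofReal.continuousAt.comp
      exact ContinuousAt.div
        (Real.continuous_cos.comp (by fun_prop)).continuousAt
        (Real.continuous_sin.comp (by fun_prop)).continuousAt hs
    · exact hg.continuous.continuousAt

lemma II1_int (hf : ContDiff ℝ (⊤ : ℕ∞) f) (hg : ContDiff ℝ (⊤ : ℕ∞) g)
    (hfp : Function.Periodic f (2 * π)) (hgp : Function.Periodic g (2 * π)) :
    IntervalIntegrable (II1 f g α) volume 0 (2 * π) := by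
  have hf2 : ContDiff ℝ (⊤ : ℕ∞) (fun x => f x ^ 2) := hf.pow 2
  have hfp2 : Function.Periodic (fun x => f x ^ 2) (2 * π) := fun x => by simp [hfp x]
  obtain ⟨L2, hL20, hL2⟩ := key_bound hf2 hfp2 α
  obtain ⟨Mg', hMg'0, hMg'⟩ := bdd_of_periodic (hg.continuous_deriv (by simp)) (deriv_periodic hgp)
  apply intInt_of_bound (C := L2 * Mg')
  · apply Measurable.aestronglyMeasurable
    unfold II1 uu
    exact ((continuous_const.sub (hf.continuous.pow 2)).measurable.mul
      (Complex.measurable_ofReal.comp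
        (((Real.continuous_cos.comp (by fun_prop)).measurable).div
          ((Real.continuous_sin.comp (by fun_prop : Continuous fun x : ℝ => (x - α) / 2)).measurable)))).mul
      (hg.continuous_deriv (by simp)).measurable
  · intro t
    unfold II1
    rw [norm_mul]
    exact mul_le_mul (norm_mul_ct_le α t hL20 (hL2 t)) (hMg' t) (norm_nonneg _) hL20

lemma II2_int (hf : ContDiff ℝ (⊤ : ℕ∞) f) (hg : ContDiff ℝ (⊤ : ℕ∞) g)
    (hfp : Function.Periodic f (2 * π)) (hgp : Function.Periodic g (2 * π)) :
    IntervalIntegrable (II2 f g α) volume 0 (2 * π) := by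
  obtain ⟨L1, hL10, hL1⟩ := key_bound hf hfp α
  have hfgp : Function.Periodic (fun x => f x * g x) (2 * π) := fun x => by simp [hfp x, hgp x]
  obtain ⟨M, hM0, hM⟩ := bdd_of_periodic ((hf.mul hg).continuous_deriv (by simp))
    (deriv_periodic hfgp)
  apply intInt_of_bound (C := L1 * M)
  · apply Measurable.aestronglyMeasurable
    unfold II2 uu
    exact ((continuous_const.sub hf.continuous).measurable.mul
      (Complex.measurable_ofReal.comp
        (((Real.continuous_cos.comp (by fun_prop)).measurable).div
          ((Real.continuous_sin.comp (by fun_prop : Continuous fun x : ℝ => (x - α) / 2)).measurable)))).mul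
      ((hf.mul hg).continuous_deriv (by simp)).measurable
  · intro t
    unfold II2
    rw [norm_mul]
    exact mul_le_mul (norm_mul_ct_le α t hL10 (hL1 t)) (hM t) (norm_nonneg _) hL10

lemma QQ_int (hf : ContDiff ℝ (⊤ : ℕ∞) f) (hg : ContDiff ℝ (⊤ : ℕ∞) g)
    (hfp : Function.Periodic f (2 * π)) (hgp : Function.Periodic g (2 * π)) :
    IntervalIntegrable (QQ f g α) volume 0 (2 * π) := by
  obtain ⟨L1, hL10, hL1⟩ := key_bound hf hfp α
  obtain ⟨Mg, hMg0, hMg⟩ := bdd_of_periodic hg.continuous hgp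
  apply intInt_of_bound (C := L1 * L1 * Mg)
  · apply Measurable.aestronglyMeasurable
    unfold QQ ss
    have hm : Measurable fun t => (f α - f t) / ((Real.sin ((t - α) / 2) : ℝ) : ℂ) :=
      (continuous_const.sub hf.continuous).measurable.div
        (Complex.measurable_ofReal.comp
          (Real.continuous_sin.comp (by fun_prop : Continuous fun x : ℝ => (x - α) / 2)).measurable)
    exact (hm.mul hm).mul hg.continuous.measurable
  · intro t
    have h1 : ‖(f α - f t) / ((ss α t : ℝ) : ℂ)‖ ≤ L1 := norm_div_sin_le α t hL10 (hL1 t)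
    calc ‖QQ f g α t‖
        = ‖(f α - f t) / ((ss α t : ℝ) : ℂ)‖ * ‖(f α - f t) / ((ss α t : ℝ) : ℂ)‖ * ‖g t‖ := by
          unfold QQ; rw [norm_mul, norm_mul]
      _ ≤ L1 * L1 * Mg := by
          have h2 := hMg t
          gcongr

lemma HHd_int (hf : ContDiff ℝ (⊤ : ℕ∞) f) (hg : ContDiff ℝ (⊤ : ℕ∞) g)
    (hfp : Function.Periodic f (2 * π)) (hgp : Function.Periodic g (2 * π)) :
    IntervalIntegrable (HHd f g α) volume 0 (2 * π) :=
  ((II1_int hf hg hfp hgp).sub ((II2_int hf hg hfp hgp).const_mul 2)).sub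
    ((QQ_int hf hg hfp hgp).const_mul (1 / 2))

lemma HH_per (hfp : Function.Periodic f (2 * π)) (hgp : Function.Periodic g (2 * π)) (β : ℝ) :
    HH f g α (β + 2 * π) = HH f g α β := by
  unfold HH uu
  have harg : (β + 2 * π - α) / 2 = (β - α) / 2 + π := by ring
  rw [hfp β, hgp β, harg, Real.cos_add_pi, Real.sin_add_pi, neg_div_neg_eq]

lemma ftc (hf : ContDiff ℝ (⊤ : ℕ∞) f) (hg : ContDiff ℝ (⊤ : ℕ∞) g)
    (hfp : Function.Periodic f (2 * π)) (hgp : Function.Periodic g (2 * π))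
    {a b : ℝ} (hab : a ≤ b) (h0 : 0 ≤ a) (h2 : b ≤ 2 * π)
    (hsing : ∀ x ∈ Ioo a b, ss α x ≠ 0) :
    ∫ β in a..b, HHd f g α β = HH f g α b - HH f g α a := by
  apply integral_eq_sub_of_hasDeriv_right_of_le hab
    (fun x _ => (continuousAt_HH hf hg hfp x).continuousWithinAt)
    (fun x hx => (hasDerivAt_HH hf hg (hsing x hx)).hasDerivWithinAt)
  apply (HHd_int hf hg hfp hgp).mono_set
  rw [uIcc_of_le hab, uIcc_of_le (by positivity : (0:ℝ) ≤ 2 * π)]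
  exact Icc_subset_Icc h0 h2
end lems

/-- For smooth `2π`-periodic `f, g` on the circle:
`[f², H̃]∂g − 2[f, H̃]∂(fg) = −[f, f; g]`. -/
theorem comm_sq_identity (f g : ℝ → ℂ)
    (hf : ContDiff ℝ (⊤ : ℕ∞) f) (hg : ContDiff ℝ (⊤ : ℕ∞) g)
    (hfp : Function.Periodic f (2 * Real.pi)) (hgp : Function.Periodic g (2 * Real.pi))
    (α : ℝ) :
    commHtilde (fun x => f x ^ 2) (deriv g) α
        - 2 * commHtilde f (deriv (fun x => f x * g x)) α
      = - doubleDiff f f g α := by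
  have hπ : (0:ℝ) < π := Real.pi_pos
  have hI1 := II1_int (α := α) hf hg hfp hgp
  have hI2 := II2_int (α := α) hf hg hfp hgp
  have hQ := QQ_int (α := α) hf hg hfp hgp
  set c : ℝ := 2 * π * Int.fract (α / (2 * π)) with hc
  have hc0 : 0 ≤ c := mul_nonneg (by positivity) (Int.fract_nonneg _)
  have hc2 : c < 2 * π := by
    have h := Int.fract_lt_one (α / (2 * π))
    calc c < 2 * π * 1 := by rw [hc]; exact mul_lt_mul_of_pos_left h (by positivity)
      _ = 2 * π := by ring
  have hαc : α - c = 2 * π * ⌊α / (2 * π)⌋ := by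
    rw [hc, Int.fract]
    field_simp; ring
  have hsingen : ∀ x, ss α x = 0 → ∃ m : ℤ, x - c = 2 * π * m := by
    intro x hx
    unfold ss at hx
    obtain ⟨n, hn⟩ := Real.sin_eq_zero_iff.1 hx
    refine ⟨⌊α / (2 * π)⌋ + n, ?_⟩
    push_cast
    have hx2 : x = α + n * (2 * π) := by linarith
    rw [hx2]
    linarith [hαc]
  have hs1 : ∀ x ∈ Ioo (0:ℝ) c, ss α x ≠ 0 := by
    intro x hx hx0
    obtain ⟨m, hm⟩ := hsingen x hx0
    have h1 : (m:ℝ) < 0 := by nlinarith [hx.1, hx.2, hπ, hm]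
    have h2 : (-1:ℝ) < (m:ℝ) := by nlinarith [hx.1, hx.2, hπ, hm, hc2]
    have hm1 : m < 0 := by exact_mod_cast h1
    have hm2 : (-1:ℤ) < m := by exact_mod_cast h2
    omega
  have hs2 : ∀ x ∈ Ioo c (2 * π), ss α x ≠ 0 := by
    intro x hx hx0
    obtain ⟨m, hm⟩ := hsingen x hx0
    have h1 : (0:ℝ) < (m:ℝ) := by nlinarith [hx.1, hx.2, hπ, hm, hc0]
    have h2 : (m:ℝ) < 1 := by nlinarith [hx.1, hx.2, hπ, hm, hc0]
    have hm1 : 0 < m := by exact_mod_cast h1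
    have hm2 : m < 1 := by exact_mod_cast h2
    omega
  have hper : HH f g α (2 * π) = HH f g α 0 := by
    have h := HH_per (α := α) hfp hgp 0
    simpa using h
  have e1 : ∫ β in (0:ℝ)..c, HHd f g α β = HH f g α c - HH f g α 0 :=
    ftc hf hg hfp hgp hc0 le_rfl hc2.le hs1
  have e2 : ∫ β in c..(2 * π), HHd f g α β = HH f g α (2 * π) - HH f g α c :=
    ftc hf hg hfp hgp hc2.le hc0 le_rfl hs2
  have esum : ∫ β in (0:ℝ)..(2 * π), HHd f g α β = 0 := by
    rw [← integral_add_adjacent_intervals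
        ((HHd_int hf hg hfp hgp).mono_set (by
          rw [uIcc_of_le hc0, uIcc_of_le (by positivity : (0:ℝ) ≤ 2 * π)]
          exact Icc_subset_Icc le_rfl hc2.le))
        ((HHd_int hf hg hfp hgp).mono_set (by
          rw [uIcc_of_le hc2.le, uIcc_of_le (by positivity : (0:ℝ) ≤ 2 * π)]
          exact Icc_subset_Icc hc0 le_rfl)),
      e1, e2, hper]
    ring
  have esplit : ∫ β in (0:ℝ)..(2 * π), HHd f g α β
      = (∫ β in (0:ℝ)..(2 * π), II1 f g α β) - 2 * (∫ β in (0:ℝ)..(2 * π), II2 f g α β)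
        - (1 / 2 : ℂ) * ∫ β in (0:ℝ)..(2 * π), QQ f g α β := by
    unfold HHd
    rw [integral_sub (hI1.sub (hI2.const_mul 2)) (hQ.const_mul (1 / 2)),
        integral_sub hI1 (hI2.const_mul 2), intervalIntegral.integral_const_mul, intervalIntegral.integral_const_mul]
  rw [esplit] at esum
  have d1 : commHtilde (fun x => f x ^ 2) (deriv g) α
      = (1 / (2 * (Real.pi : ℂ) * Complex.I)) * ∫ β in (0:ℝ)..(2 * Real.pi), II1 f g α β := rfl
  have d2 : commHtilde f (deriv (fun x => f x * g x)) α
      = (1 / (2 * (Real.pi : ℂ) * Complex.I)) * ∫ β in (0:ℝ)..(2 * Real.pi), II2 f g α β := rfl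
  have d3 : doubleDiff f f g α
      = -(1 / (4 * (Real.pi : ℂ) * Complex.I)) * ∫ β in (0:ℝ)..(2 * Real.pi), QQ f g α β := rfl
  rw [d1, d2, d3]
  linear_combination (1 / (2 * (Real.pi : ℂ) * Complex.I)) * esum
end
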